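/- Let θ : G → Q be a group homomorphism whose kernel is contained in the center of G, and let L be a subgroup of G satisfying: (i) for every z in the kernel of θ, if z^n ∈ L for some n ≥ 1 then z ∈ L; and (ii) the commensurator of θ(L) in Q equals the normalizer of θ(L) in Q. Then the commensurator of L in G equals the normalizer of L in G, i.e. N_G[L] = N_G(L). -/

import Mathlib

/-!
If `g` commensurates `L`, then `θ g` commensurates, hence normalizes, `θ(L)`, so every
`a ∈ gLg⁻¹` factors as `a = y z` with `y ∈ L` and `z ∈ ker θ` central. Commensurability puts
some power `aⁿ = yⁿ zⁿ` in `L`, so `zⁿ ∈ L` and, by root-closure, `z ∈ L`. Hence `gLg⁻¹ ≤ L`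
for every `g` in the commensurator; applied also to `g⁻¹` this gives `gLg⁻¹ = L`.
-/

open Subgroup Pointwise

namespace Subgroup

variable {G G' : Type*} [Group G] [Group G']

theorem relIndex_map_dvd (f : G →* G') (H K : Subgroup G) :
    (H.map f).relIndex (K.map f) ∣ H.relIndex K := by
  simpa only [relIndex_comap] using relIndex_dvd_of_le_left K (le_comap_map f H)

theorem Commensurable.map (f : G →* G') {H K : Subgroup G} (h : Commensurable H K) :
    Commensurable (H.map f) (K.map f) :=
  ⟨ne_zero_of_dvd_ne_zero h.1 (relIndex_map_dvd f H K),
    ne_zero_of_dvd_ne_zero h.2 (relIndex_map_dvd f K H)⟩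

theorem map_conjAct_smul (f : G →* G') (g : G) (H : Subgroup G) :
    (ConjAct.toConjAct g • H).map f = ConjAct.toConjAct (f g) • H.map f := by
  ext q
  simp only [mem_map, mem_smul_pointwise_iff_exists, ConjAct.toConjAct_smul]
  constructor
  · rintro ⟨_, ⟨x, hx, rfl⟩, rfl⟩
    exact ⟨f x, ⟨x, hx, rfl⟩, by simp⟩
  · rintro ⟨_, ⟨x, hx, rfl⟩, rfl⟩
    exact ⟨g * x * g⁻¹, ⟨x, hx, rfl⟩, by simp⟩

theorem map_mem_commensurator (f : G →* G') {H : Subgroup G} {g : G}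
    (hg : g ∈ Commensurable.commensurator H) :
    f g ∈ Commensurable.commensurator (H.map f) := by
  rw [Commensurable.commensurator_mem_iff, ← map_conjAct_smul]
  exact hg.map f

theorem normalizer_le_commensurator (H : Subgroup G) :
    normalizer (H : Set G) ≤ Commensurable.commensurator H := fun g hg =>
  (Commensurable.commensurator_mem_iff H g).2 <|
    (conjAct_pointwise_smul_eq_self hg).symm ▸ Commensurable.refl H

theorem le_normalizer_of_conjAct_smul_le {H S : Subgroup G}
    (h : ∀ g ∈ S, ConjAct.toConjAct g • H ≤ H) : S ≤ normalizer (H : Set G) := fun g hg => by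
  rw [← conjAct_pointwise_smul_iff]
  refine le_antisymm (h g hg) ?_
  rw [subset_pointwise_smul_iff, ← ConjAct.toConjAct_inv]
  exact h g⁻¹ (inv_mem hg)

theorem pow_mem_of_mul_pow_mem {H : Subgroup G} {y z : G} (hy : y ∈ H) (hz : z ∈ center G)
    {n : ℕ} (h : (y * z) ^ n ∈ H) : z ^ n ∈ H := by
  rw [Commute.mul_pow (mem_center_iff.1 hz y)] at h
  simpa using mul_mem (inv_mem (pow_mem hy n)) h

theorem conjAct_smul_le_of_map_mem_normalizer {θ : G →* G'} (hcentral : θ.ker ≤ center G)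
    {L : Subgroup G} (hroot : ∀ z ∈ θ.ker, ∀ n : ℕ, 1 ≤ n → z ^ n ∈ L → z ∈ L) {g : G}
    (hg : g ∈ Commensurable.commensurator L) (hθg : θ g ∈ normalizer (L.map θ : Set G')) :
    ConjAct.toConjAct g • L ≤ L := by
  intro a ha
  obtain ⟨y, hy, hθy⟩ : θ a ∈ L.map θ := by
    rw [← conjAct_pointwise_smul_eq_self hθg, ← map_conjAct_smul]
    exact mem_map_of_mem θ ha
  have hz : y⁻¹ * a ∈ θ.ker := by simp [MonoidHom.mem_ker, hθy]
  obtain ⟨n, hn, -, han⟩ := exists_pow_mem_of_relIndex_ne_zero hg.2 ha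
  rw [← mul_inv_cancel_left y a] at han ⊢
  exact mul_mem hy (hroot _ hz n hn (pow_mem_of_mul_pow_mem hy (hcentral hz) han.1))

end Subgroup

theorem commensurator_eq_normalizer_of_map
    {G Q : Type*} [Group G] [Group Q] (θ : G →* Q)
    (hcentral : θ.ker ≤ Subgroup.center G) (L : Subgroup G)
    (hroot : ∀ z ∈ θ.ker, ∀ n : ℕ, 1 ≤ n → z ^ n ∈ L → z ∈ L)
    (himg : Subgroup.Commensurable.commensurator (L.map θ) = Subgroup.normalizer ((L.map θ : Subgroup Q) : Set Q)) :
    Subgroup.Commensurable.commensurator L = Subgroup.normalizer (L : Set G) := by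
  refine le_antisymm (le_normalizer_of_conjAct_smul_le fun g hg => ?_)
    (normalizer_le_commensurator L)
  exact conjAct_smul_le_of_map_mem_normalizer hcentral hroot hg
    (himg ▸ map_mem_commensurator θ hg)
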